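/- Let n be even and let T be the linear operator on homogeneous degree-n polynomials over ℚ given by (T·P)(X,Y) = P(-Y, X+Y) (the action of t = [[0,-1],[1,1]]). Then T³ = 1 and the dimension of the fixed space ker(T - 1) equals (n + 1 + 2·tr(T))/3. -/

import Mathlib

/-!
Since `T ^ 3 = 1` and `3` is invertible, `(1 + T + T²) / 3` is a projection onto `ker (T - 1)`,
so `3 · dim ker (T - 1) = tr 1 + tr T + tr T²`. On linear forms `t³ = -1`, so `T³ = (-1)ⁿ = 1`
in even degree `n`. The swap `σ : X ↔ Y` and `σ T` are both involutions, hence `σ T σ = T⁻¹ = T²`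
and `tr T² = tr T`.
-/

open MvPolynomial Module

section Averaging

variable {K V : Type*} [Field K] [AddCommGroup V] [Module K V]

theorem isProj_ker_sub_one_inv_smul_sum_pow {f : Module.End K V} {m : ℕ} (hf : f ^ m = 1)
    (hm : (m : K) ≠ 0) :
    LinearMap.IsProj (LinearMap.ker (f - 1)) ((m : K)⁻¹ • ∑ i ∈ Finset.range m, f ^ i) where
  map_mem x := by
    rw [LinearMap.mem_ker, ← Module.End.mul_apply, mul_smul_comm, mul_geom_sum, hf, sub_self,
      smul_zero, LinearMap.zero_apply]
  map_id x hx := by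
    have hfx : f x = x := by simpa [sub_eq_zero] using hx
    have hpow (i : ℕ) : (f ^ i) x = x := by
      rw [Module.End.pow_apply]; exact Function.iterate_fixed hfx i
    simp only [LinearMap.smul_apply, LinearMap.sum_apply, hpow, Finset.sum_const,
      Finset.card_range]
    rw [← Nat.cast_smul_eq_nsmul K, smul_smul, inv_mul_cancel₀ hm, one_smul]

theorem natCast_mul_finrank_ker_sub_one_eq_sum_trace_pow [FiniteDimensional K V]
    {f : Module.End K V} {m : ℕ} (hf : f ^ m = 1) (hm : (m : K) ≠ 0) :
    (m : K) * finrank K (LinearMap.ker (f - 1)) =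
      ∑ i ∈ Finset.range m, LinearMap.trace K V (f ^ i) := by
  rw [← (isProj_ker_sub_one_inv_smul_sum_pow hf hm).trace, map_smul, map_sum, smul_eq_mul,
    mul_inv_cancel_left₀ hm]

end Averaging

theorem LinearMap.trace_sq_eq_trace_of_involutions {R M : Type*} [CommRing R] [AddCommGroup M]
    [Module R M] {f s : Module.End R M} (hs : s ^ 2 = 1) (hsf : (s * f) ^ 2 = 1)
    (hf : f ^ 3 = 1) : trace R M (f ^ 2) = trace R M f := by
  have hconj : s * f * s = f ^ 2 :=
    calc s * f * s = s * f * s * f ^ 3 := by rw [hf, mul_one]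
      _ = (s * f) ^ 2 * f ^ 2 := by noncomm_ring
      _ = f ^ 2 := by rw [hsf, one_mul]
  rw [← hconj, trace_mul_comm, ← mul_assoc, ← sq, hs, one_mul]

namespace MvPolynomial

instance {σ R : Type*} [Finite σ] [CommSemiring R] (n : ℕ) :
    Module.Finite R (homogeneousSubmodule σ R n) :=
  Module.Finite.iff_fg.mpr (homogeneousSubmodule_fg σ R n)

theorem finrank_homogeneousSubmodule {σ R : Type*} [Fintype σ] [CommRing R]
    [StrongRankCondition R] (n : ℕ) :
    finrank R (homogeneousSubmodule σ R n) = (Fintype.card σ + n - 1).choose n := by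
  classical
  have hsupport : {d : σ →₀ ℕ | d.degree = n} =
      (Finset.univ.finsuppAntidiag n : Finset (σ →₀ ℕ)) := by
    ext d; simp [Finsupp.degree_eq_sum]
  rw [homogeneousSubmodule_eq_finsupp_supported]
  change finrank R (restrictSupport R _) = _
  rw [finrank_eq_nat_card_basis (basisRestrictSupport R _), hsupport, Nat.card_coe_set_eq,
    Set.ncard_coe_finset, Finset.card_finsuppAntidiag_nat_eq_choose, Finset.card_univ]

theorem finrank_homogeneousSubmodule_fin_two {R : Type*} [CommRing R] [StrongRankCondition R]
    (n : ℕ) : finrank R (homogeneousSubmodule (Fin 2) R n) = n + 1 := by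
  rw [finrank_homogeneousSubmodule, Fintype.card_fin, show 2 + n - 1 = n + 1 by omega,
    Nat.choose_succ_self_right]

theorem IsHomogeneous.aeval_C_mul_X {σ R : Type*} [CommSemiring R]
    {φ : MvPolynomial σ R} {n : ℕ} (hφ : φ.IsHomogeneous n) (c : R) :
    MvPolynomial.aeval (fun i => C c * X i) φ = C (c ^ n) * φ :=
  calc MvPolynomial.aeval (fun i => C c * X i) φ
      = ∑ d ∈ φ.support, MvPolynomial.aeval (fun i => C c * X i) (monomial d (coeff d φ)) := by
        rw [← map_sum, support_sum_monomial_coeff]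
    _ = ∑ d ∈ φ.support, C (c ^ n) * monomial d (coeff d φ) := by
        refine Finset.sum_congr rfl fun d hd => ?_
        have hdeg : d.degree = n := by
          rw [Finsupp.degree_eq_weight_one]; exact hφ (mem_support_iff.mp hd)
        simp only [aeval_monomial, Finsupp.prod, mul_pow, Finset.prod_mul_distrib, ← map_pow,
          ← map_prod, Finset.prod_pow_eq_pow_sum]
        rw [← Finsupp.degree_apply, hdeg, monomial_eq, Finsupp.prod, algebraMap_eq]
        ring
    _ = C (c ^ n) * φ := by rw [← Finset.mul_sum, support_sum_monomial_coeff]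

theorem rename_mem_homogeneousSubmodule {σ τ R : Type*} [CommSemiring R] {n : ℕ} (f : σ → τ) :
    ∀ P ∈ homogeneousSubmodule σ R n, (rename f).toLinearMap P ∈ homogeneousSubmodule τ R n :=
  fun _ hP => hP.rename_isHomogeneous

end MvPolynomial

namespace BinaryForms

variable {R : Type*} [CommRing R] {n : ℕ}

local notation "𝒯" =>
  (aeval ![-X 1, X 0 + X 1] : MvPolynomial (Fin 2) R →ₐ[R] MvPolynomial (Fin 2) R)
local notation "𝒮" =>
  (rename (Equiv.swap 0 1) : MvPolynomial (Fin 2) R →ₐ[R] MvPolynomial (Fin 2) R)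

theorem t_pow_three : 𝒯 ^ 3 = aeval fun i => C (-1) * X i := by
  refine algHom_ext fun i => ?_
  fin_cases i <;> simp [pow_succ]

theorem swap_mul_t_sq : (𝒮 * 𝒯) ^ 2 = 1 := by
  refine algHom_ext fun i => ?_
  fin_cases i <;> simp [pow_succ]

theorem swap_sq : 𝒮 ^ 2 = 1 := by
  refine algHom_ext fun i => ?_
  fin_cases i <;> simp [pow_succ]

theorem restrict_t_pow_three (hn : Even n)
    (h : ∀ P ∈ homogeneousSubmodule (Fin 2) R n,
      (𝒯).toLinearMap P ∈ homogeneousSubmodule (Fin 2) R n) :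
    (𝒯).toLinearMap.restrict h ^ 3 = 1 := by
  refine LinearMap.ext fun P => Subtype.ext ?_
  have hP : (P : MvPolynomial (Fin 2) R).IsHomogeneous n := P.2
  have hT := congr($(t_pow_three (R := R)) P)
  simp only [pow_succ, pow_zero, one_mul, AlgHom.mul_apply] at hT
  simp only [pow_succ, pow_zero, one_mul, Module.End.mul_apply, LinearMap.coe_restrict_apply,
    AlgHom.toLinearMap_apply, Module.End.one_apply, hT, hP.aeval_C_mul_X, hn.neg_one_pow, C_1]

theorem restrict_swap_mul_restrict_t_sq
    (h : ∀ P ∈ homogeneousSubmodule (Fin 2) R n,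
      (𝒯).toLinearMap P ∈ homogeneousSubmodule (Fin 2) R n) :
    ((𝒮).toLinearMap.restrict (rename_mem_homogeneousSubmodule _) *
      (𝒯).toLinearMap.restrict h) ^ 2 = 1 := by
  refine LinearMap.ext fun P => Subtype.ext ?_
  simpa [pow_succ] using congr($(swap_mul_t_sq (R := R)) P)

theorem restrict_swap_sq :
    (𝒮).toLinearMap.restrict (rename_mem_homogeneousSubmodule (R := R) (n := n) _) ^ 2 = 1 := by
  refine LinearMap.ext fun P => Subtype.ext ?_
  simpa [pow_succ] using congr($(swap_sq (R := R)) P)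

end BinaryForms

theorem dim_fixed_space_T (n : ℕ) (he : Even n)
    (h : ∀ P ∈ homogeneousSubmodule (Fin 2) ℚ n,
      (aeval ![-X 1, X 0 + X 1] :
        MvPolynomial (Fin 2) ℚ →ₐ[ℚ] MvPolynomial (Fin 2) ℚ).toLinearMap P ∈
        homogeneousSubmodule (Fin 2) ℚ n) :
    (aeval ![-X 1, X 0 + X 1] :
        MvPolynomial (Fin 2) ℚ →ₐ[ℚ] MvPolynomial (Fin 2) ℚ).toLinearMap.restrict h ^ 3 = 1 ∧
    (3 * finrank ℚ
        (LinearMap.ker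
          ((aeval ![-X 1, X 0 + X 1] :
            MvPolynomial (Fin 2) ℚ →ₐ[ℚ] MvPolynomial (Fin 2) ℚ).toLinearMap.restrict h - 1)) : ℚ)
      = n + 1 + 2 * LinearMap.trace ℚ _
          ((aeval ![-X 1, X 0 + X 1] :
            MvPolynomial (Fin 2) ℚ →ₐ[ℚ] MvPolynomial (Fin 2) ℚ).toLinearMap.restrict h) := by
  have hT := BinaryForms.restrict_t_pow_three he h
  have htrace := LinearMap.trace_sq_eq_trace_of_involutions BinaryForms.restrict_swap_sq
    (BinaryForms.restrict_swap_mul_restrict_t_sq h) hT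
  refine ⟨hT, ?_⟩
  have hfix := natCast_mul_finrank_ker_sub_one_eq_sum_trace_pow hT
    (by norm_num : ((3 : ℕ) : ℚ) ≠ 0)
  rw [Finset.sum_range_succ, Finset.sum_range_succ, Finset.sum_range_one, pow_zero, pow_one,
    htrace, LinearMap.trace_one, finrank_homogeneousSubmodule_fin_two] at hfix
  push_cast at hfix
  linarith
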